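/- arXiv:2601.11306 — 3 statements merged into one kernel-verified Lean document; each statement's English description precedes it below -/
import Mathlib

section
/- Let q ∈ ℂ with q ≠ 0 and q² ≠ 1, set ω = q − q⁻¹, let m ≥ 1, let μ₁, …, μ_m ∈ ℂ, and fix 1 ≤ k ≤ m. For any tuple ν = (ν₁, …, ν_m) define T(X; ν) := −ω⁻¹ · (∏_{i=1}^{m} (1 − ν_i X) · (∏_{i=1}^{m} (1 − q⁻² ν_i X))⁻¹ − 1) ∈ ℂ[[X]], and let S_k(X) := μ_k X · ((1 − μ_k X)⁻¹)² ∈ ℂ[[X]]. Let μ″ be the tuple obtained from μ by replacing μ_k with q² μ_k. Then in ℂ[[X]]: T(X; μ″) − ω S_k(X) = T(X; μ) · (1 − ω² S_k(X)). -/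
open Finset PowerSeries

/-!
Write `R(ν) = ∏ (1 - ν_i X) / ∏ (1 - q⁻² ν_i X)` (`qRatio q ν`), so that `T(ν) = -ω⁻¹ (R(ν) - 1)`.
Replacing `μ_k` by `q² μ_k` multiplies `R` by `(1 - q² μ_k X)(1 - q⁻² μ_k X) / (1 - μ_k X)²`,
and since `q² + q⁻² = 2 + ω²` this factor is exactly `1 - ω² S_k(X)`. The identity for `T`
is then a linear rearrangement.
-/

open Function

theorem Finset.prod_apply_update {ι α M : Type*} [Fintype ι] [DecidableEq ι] [CommMonoid M]
    (g : α → M) (μ : ι → α) (k : ι) (a : α) :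
    ∏ i, g (update μ k a i) = g a * ∏ i ∈ univ.erase k, g (μ i) := by
  rw [← mul_prod_erase _ _ (mem_univ k), update_self]
  congr 1
  exact prod_congr rfl fun i hi => by rw [update_of_ne (ne_of_mem_erase hi)]

namespace PowerSeries

theorem one_sub_C_mul_X_mul_one_sub_C_mul_X {R : Type*} [CommRing R] {q r : R}
    (hqr : q * r = 1) (c : R) :
    (1 - C (q ^ 2 * c) * X) * (1 - C (r ^ 2 * c) * X)
      = (1 - C c * X) ^ 2 - C ((q - r) ^ 2) * (C c * X) := by
  have hC : C q * C r = 1 := by rw [← map_mul, hqr, map_one]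
  simp only [map_mul, map_pow, map_sub]
  linear_combination ((C q * C r + 1) * C c ^ 2 * X ^ 2 - 2 * C c * X) * hC

variable {K : Type*} [Field K]

theorem one_sub_C_sq_mul_eq {q : K} (hq : q ≠ 0) (c : K) :
    1 - C ((q - q⁻¹) ^ 2) * (C c * X * ((1 - C c * X)⁻¹) ^ 2)
      = (1 - C (q ^ 2 * c) * X) * (1 - C (q⁻¹ ^ 2 * c) * X) * ((1 - C c * X)⁻¹) ^ 2 := by
  have hinv : (1 - C c * X) * (1 - C c * X)⁻¹ = 1 :=
    PowerSeries.mul_inv_cancel _ (by simp)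
  rw [one_sub_C_mul_X_mul_one_sub_C_mul_X (mul_inv_cancel₀ hq)]
  linear_combination (-((1 - C c * X) * (1 - C c * X)⁻¹ + 1)) * hinv

noncomputable def qRatio {ι : Type*} [Fintype ι] (q : K) (ν : ι → K) : K⟦X⟧ :=
  (∏ i, (1 - C (ν i) * X)) * (∏ i, (1 - C (q⁻¹ ^ 2 * ν i) * X))⁻¹

theorem qRatio_update {ι : Type*} [Fintype ι] [DecidableEq ι] {q : K} (hq : q ≠ 0)
    (μ : ι → K) (k : ι) :
    qRatio q (update μ k (q ^ 2 * μ k))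
      = qRatio q μ * (1 - C ((q - q⁻¹) ^ 2) * (C (μ k) * X * ((1 - C (μ k) * X)⁻¹) ^ 2)) := by
  set f₁ : K⟦X⟧ := 1 - C (μ k) * X
  set f₃ : K⟦X⟧ := 1 - C (q⁻¹ ^ 2 * μ k) * X
  set B : K⟦X⟧ := ∏ i ∈ univ.erase k, (1 - C (q⁻¹ ^ 2 * μ i) * X)
  have h₁ : f₁ * f₁⁻¹ = 1 := PowerSeries.mul_inv_cancel _ (by simp [f₁])
  have h₃ : f₃ * f₃⁻¹ = 1 := PowerSeries.mul_inv_cancel _ (by simp [f₃])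
  have hden : ∏ i, (1 - C (q⁻¹ ^ 2 * update μ k (q ^ 2 * μ k) i) * X) = f₁ * B := by
    have hcancel : q⁻¹ ^ 2 * (q ^ 2 * μ k) = μ k := by field_simp
    rw [prod_apply_update (fun a => 1 - C (q⁻¹ ^ 2 * a) * X), hcancel]
  rw [one_sub_C_sq_mul_eq hq, qRatio, qRatio, hden, prod_apply_update (fun a => 1 - C a * X),
    ← mul_prod_erase _ (fun i => 1 - C (q⁻¹ ^ 2 * μ i) * X) (mem_univ k),
    ← mul_prod_erase _ (fun i => 1 - C (μ i) * X) (mem_univ k),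
    PowerSeries.mul_inv_rev, PowerSeries.mul_inv_rev]
  -- The factors with `i ≠ k` are common to both sides, and `f₁`, `f₃` cancel against their inverses.
  linear_combination (-((1 - C (q ^ 2 * μ k) * X) * (∏ i ∈ univ.erase k, (1 - C (μ i) * X))
    * B⁻¹ * f₁⁻¹)) * (h₁ + f₁ * f₁⁻¹ * h₃)

end PowerSeries

theorem stmt_10_general (q : ℂ) (hq : q ≠ 0) (ω : ℂ) (hω : ω = q - q⁻¹)
    (m : ℕ) (μ : Fin m → ℂ) (k : Fin m)
    (T : (Fin m → ℂ) → PowerSeries ℂ)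
    (hT : ∀ ν : Fin m → ℂ, T ν = -C ω⁻¹ *
      ((∏ i, (1 - C (ν i) * X)) * (∏ i, (1 - C (q⁻¹ ^ 2 * ν i) * X))⁻¹ - 1))
    (S : PowerSeries ℂ)
    (hS : S = C (μ k) * X * ((1 - C (μ k) * X)⁻¹) ^ 2) :
    T (Function.update μ k (q ^ 2 * μ k)) - C ω * S
      = T μ * (1 - C (ω ^ 2) * S) := by
  have hTR : ∀ ν, T ν = -C ω⁻¹ * (qRatio q ν - 1) := hT
  have hω' : C ω⁻¹ * C (ω ^ 2) = C ω := by
    rw [← map_mul, sq, ← mul_assoc, inv_mul_mul_self]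
  rw [hTR, hTR, qRatio_update hq, ← hω, ← hS]
  linear_combination S * hω'

/-- the shift identity `T(X; μ″) − ωS_k(X) = T(X; μ)·(1 − ω²S_k(X))`, where
`μ″` replaces `μ_k` by `q²μ_k` and `S_k(X) = z/(1−z)²` at `z = μ_k X`. -/
theorem stmt_10 (q : ℂ) (hq : q ≠ 0) (hq2 : q ^ 2 ≠ 1) (ω : ℂ) (hω : ω = q - q⁻¹)
    (m : ℕ) (hm : 1 ≤ m) (μ : Fin m → ℂ) (k : Fin m)
    (T : (Fin m → ℂ) → PowerSeries ℂ)
    (hT : ∀ ν : Fin m → ℂ, T ν = -C ω⁻¹ *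
      ((∏ i, (1 - C (ν i) * X)) * (∏ i, (1 - C (q⁻¹ ^ 2 * ν i) * X))⁻¹ - 1))
    (S : PowerSeries ℂ)
    (hS : S = C (μ k) * X * ((1 - C (μ k) * X)⁻¹) ^ 2) :
    T (Function.update μ k (q ^ 2 * μ k)) - C ω * S
      = T μ * (1 - C (ω ^ 2) * S) :=
  stmt_10_general q hq ω hω m μ k T hT S hS
end

section
/- Let A be an associative unital ℂ-algebra, ω ∈ ℂ, and let r₁, …, r_K ∈ A satisfy the braid relations r_i r_{i+1} r_i = r_{i+1} r_i r_{i+1} (for 1 ≤ i ≤ K−1), r_i r_j = r_j r_i whenever |i−j| ≥ 2, and the Hecke condition r_i² = 1 + ω r_i. Define the Jucys–Murphy elements by j₁ = 1 and j_p = r_{p−1} j_{p−1} r_{p−1} for 2 ≤ p ≤ K+1. Then for every 1 ≤ k ≤ K and every n ≥ 1: j_{k+1}ⁿ = r_k j_kⁿ r_k + ω Σ_{s=1}^{n−1} j_k^s r_k j_k^{n−s} + ω² Σ_{s=1}^{n−1} s · j_k^s j_{k+1}^{n−s}. -/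
/-!
Write `x = j_k`, `y = j_{k+1} = ρ x ρ` with `ρ = r_k`. The Hecke relation gives `y ρ = ρ x + ω y`,
so if `x` and `y` commute, multiplying the expansion of `yⁿ` on the left by `y` and pushing `y`
through each `ρ` produces exactly one extra `ω`-term per summand, which yields the formula by
induction on `n`. That adjacent Jucys–Murphy elements commute follows by induction on `k` from the
braid relations, since `r_{k+1}` commutes with `j_k`.
-/

open Finset

section Hecke

variable {R A : Type*} [CommSemiring R] [Semiring A] [Algebra R A] {ω : R} {x y ρ : A}

theorem hecke_conj_mul_right (hy : y = ρ * x * ρ) (hρ : ρ * ρ = 1 + ω • ρ) :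
    y * ρ = ρ * x + ω • y := by
  rw [hy, mul_assoc (ρ * x), hρ, mul_add, mul_one, mul_smul_comm]

theorem hecke_conj_mul_pow_mul_pow (hy : y = ρ * x * ρ) (hρ : ρ * ρ = 1 + ω • ρ)
    (hxy : Commute x y) (s t : ℕ) :
    y * (x ^ s * ρ * x ^ t) = x ^ s * ρ * x ^ (t + 1) + ω • (x ^ (s + t) * y) := by
  calc y * (x ^ s * ρ * x ^ t) = x ^ s * (y * ρ) * x ^ t := by
        rw [← mul_assoc, ← mul_assoc, (hxy.pow_left s).symm.eq, mul_assoc (x ^ s)]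
    _ = x ^ s * ρ * x ^ (t + 1) + ω • (x ^ (s + t) * y) := by
        rw [hecke_conj_mul_right hy hρ, mul_add, add_mul, mul_smul_comm, smul_mul_assoc,
          mul_assoc, mul_assoc, ← pow_succ', ← mul_assoc, mul_assoc (x ^ s) y,
          (hxy.pow_left t).symm.eq, ← mul_assoc, ← pow_add]

theorem hecke_conj_mul_conj_pow (hy : y = ρ * x * ρ) (hρ : ρ * ρ = 1 + ω • ρ)
    (hxy : Commute x y) (n : ℕ) :
    y * (ρ * x ^ n * ρ) = ρ * x ^ (n + 1) * ρ + ω • (x ^ n * ρ * x) + ω ^ 2 • (x ^ n * y) := by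
  have h := hecke_conj_mul_pow_mul_pow hy hρ hxy 0 n
  rw [pow_zero, one_mul, zero_add] at h
  rw [← mul_assoc, ← mul_assoc, mul_assoc y, h, add_mul, mul_assoc, mul_assoc,
    smul_mul_assoc, mul_assoc, hecke_conj_mul_right hy hρ, mul_add, ← mul_assoc,
    mul_smul_comm, smul_add, smul_smul, ← sq, ← mul_assoc, add_assoc]

theorem hecke_conj_pow_succ (hy : y = ρ * x * ρ) (hρ : ρ * ρ = 1 + ω • ρ)
    (hxy : Commute x y) (n : ℕ) :
    y ^ (n + 1) = ρ * x ^ (n + 1) * ρ + ω • ∑ s ∈ Icc 1 n, x ^ s * ρ * x ^ (n + 1 - s)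
      + ω ^ 2 • ∑ s ∈ Icc 1 n, s • (x ^ s * y ^ (n + 1 - s)) := by
  induction n with
  | zero => simp [hy]
  | succ n ih =>
    have hsandwich : y * ∑ s ∈ Icc 1 n, x ^ s * ρ * x ^ (n + 1 - s)
        = ∑ s ∈ Icc 1 n, x ^ s * ρ * x ^ (n + 2 - s) + n • ω • (x ^ (n + 1) * y) := by
      have hconst : ∑ _s ∈ Icc 1 n, ω • (x ^ (n + 1) * y) = n • ω • (x ^ (n + 1) * y) := by
        simp
      rw [mul_sum, ← hconst, ← sum_add_distrib]
      refine sum_congr rfl fun s hs => ?_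
      rw [hecke_conj_mul_pow_mul_pow hy hρ hxy, Nat.add_sub_of_le (by grind),
        show n + 1 - s + 1 = n + 2 - s by grind]
    have hweighted : y * ∑ s ∈ Icc 1 n, s • (x ^ s * y ^ (n + 1 - s))
        = ∑ s ∈ Icc 1 n, s • (x ^ s * y ^ (n + 2 - s)) := by
      rw [mul_sum]
      refine sum_congr rfl fun s hs => ?_
      rw [mul_smul_comm, ← mul_assoc, (hxy.pow_left s).symm.eq, mul_assoc, ← pow_succ',
        show n + 1 - s + 1 = n + 2 - s by grind]
    rw [pow_succ', ih, mul_add, mul_add, mul_smul_comm, mul_smul_comm, hsandwich, hweighted,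
      hecke_conj_mul_conj_pow hy hρ hxy, sum_Icc_succ_top (by omega),
      sum_Icc_succ_top (by omega), show n + 1 + 1 - (n + 1) = 1 by omega, pow_one, pow_one]
    module

end Hecke

theorem commute_conj_of_braid {M : Type*} [Semigroup M] {a b z : M} (haz : Commute a z)
    (hbr : b * a * b = a * b * a) (hz : Commute z (b * z * b)) :
    Commute (b * z * b) (a * (b * z * b) * a) := by
  have hbab (t : M) : b * (a * (b * t)) = a * (b * (a * t)) := by
    simp only [← mul_assoc, hbr]
  have hza (t : M) : z * (a * t) = a * (z * t) := by
    rw [← mul_assoc, ← haz.eq, mul_assoc]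
  have hzbzb (t : M) : z * (b * (z * (b * t))) = b * (z * (b * (z * t))) := by
    simp only [← mul_assoc]; rw [mul_assoc z, mul_assoc z, hz.eq]
  have hbr' : a * (b * a) = b * (a * b) := by simp only [← mul_assoc, hbr]
  -- both sides reduce to the word `a b a z b z a b`
  have lhs : b * z * b * (a * (b * z * b) * a) = a * (b * (a * (z * (b * (z * (a * b)))))) := by
    simp only [mul_assoc]
    rw [hbab, hza, ← hza (b * a), hbr', hzbzb, hbab]
  have rhs : a * (b * z * b) * a * (b * z * b) = a * (b * (a * (z * (b * (z * (a * b)))))) := by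
    simp only [mul_assoc]
    rw [hbab, hza, ← hza b]
  exact lhs.trans rhs.symm

section JucysMurphy

variable {M : Type*} [Monoid M] {K : ℕ} {r J : ℕ → M}

theorem jm_succ (hJ : ∀ p : ℕ, 2 ≤ p → p ≤ K + 1 → J p = r (p - 1) * J (p - 1) * r (p - 1))
    {p : ℕ} (hp : 1 ≤ p) (hpK : p ≤ K) : J (p + 1) = r p * J p * r p := by
  simpa using hJ (p + 1) (by omega) (by omega)

theorem commute_generator_jm
    (hcomm : ∀ i j : ℕ, 1 ≤ i → 1 ≤ j → i ≤ K → j ≤ K → i + 2 ≤ j → r i * r j = r j * r i)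
    (hJ1 : J 1 = 1)
    (hJ : ∀ p : ℕ, 2 ≤ p → p ≤ K + 1 → J p = r (p - 1) * J (p - 1) * r (p - 1))
    {p i : ℕ} (hp : 1 ≤ p) (hpi : p < i) (hiK : i ≤ K) : Commute (r i) (J p) := by
  induction p, hp using Nat.le_induction with
  | base => rw [hJ1]; exact Commute.one_right _
  | succ p hp ih =>
    have hri : Commute (r i) (r p) := (hcomm p i hp (by omega) (by omega) hiK (by omega)).symm
    rw [jm_succ hJ hp (by omega)]
    exact (hri.mul_right (ih (by omega))).mul_right hri

theorem commute_jm_succ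
    (hbraid : ∀ i : ℕ, 1 ≤ i → i + 1 ≤ K → r i * r (i + 1) * r i = r (i + 1) * r i * r (i + 1))
    (hcomm : ∀ i j : ℕ, 1 ≤ i → 1 ≤ j → i ≤ K → j ≤ K → i + 2 ≤ j → r i * r j = r j * r i)
    (hJ1 : J 1 = 1)
    (hJ : ∀ p : ℕ, 2 ≤ p → p ≤ K + 1 → J p = r (p - 1) * J (p - 1) * r (p - 1))
    {k : ℕ} (hk : 1 ≤ k) (hkK : k ≤ K) : Commute (J k) (J (k + 1)) := by
  induction k, hk using Nat.le_induction with
  | base => rw [hJ1]; exact Commute.one_left _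
  | succ k hk ih =>
    rw [jm_succ hJ (by omega) hkK, jm_succ hJ hk (by omega)]
    have hJJ := ih (by omega)
    rw [jm_succ hJ hk (by omega)] at hJJ
    exact commute_conj_of_braid (commute_generator_jm hcomm hJ1 hJ hk (by omega) hkK)
      (hbraid k hk hkK) hJJ

end JucysMurphy

/-- in a ℂ-algebra with Hecke generators `r₁,…,r_K` and Jucys–Murphy
elements `j₁ = 1`, `j_p = r_{p−1} j_{p−1} r_{p−1}`, one has
`j_{k+1}ⁿ = r_k j_kⁿ r_k + ω Σ_{s=1}^{n−1} j_k^s r_k j_k^{n−s}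
  + ω² Σ_{s=1}^{n−1} s·j_k^s j_{k+1}^{n−s}`. -/
theorem stmt_15 (A : Type*) [Ring A] [Algebra ℂ A] (K : ℕ) (ω : ℂ) (r : ℕ → A)
    (hbraid : ∀ i : ℕ, 1 ≤ i → i + 1 ≤ K →
      r i * r (i + 1) * r i = r (i + 1) * r i * r (i + 1))
    (hcomm : ∀ i j : ℕ, 1 ≤ i → 1 ≤ j → i ≤ K → j ≤ K → i + 2 ≤ j →
      r i * r j = r j * r i)
    (hhecke : ∀ i : ℕ, 1 ≤ i → i ≤ K → r i * r i = 1 + ω • r i)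
    (J : ℕ → A) (hJ1 : J 1 = 1)
    (hJ : ∀ p : ℕ, 2 ≤ p → p ≤ K + 1 → J p = r (p - 1) * J (p - 1) * r (p - 1)) :
    ∀ k n : ℕ, 1 ≤ k → k ≤ K → 1 ≤ n →
      J (k + 1) ^ n
        = r k * J k ^ n * r k
          + ω • ∑ s ∈ Icc 1 (n - 1), J k ^ s * r k * J k ^ (n - s)
          + (ω ^ 2) • ∑ s ∈ Icc 1 (n - 1), s • (J k ^ s * J (k + 1) ^ (n - s)) := by
  intro k n hk hkK hn
  obtain ⟨m, rfl⟩ : ∃ m, n = m + 1 := ⟨n - 1, by omega⟩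
  rw [Nat.add_sub_cancel]
  exact hecke_conj_pow_succ (jm_succ hJ hk hkK) (hhecke k hk hkK)
    (commute_jm_succ hbraid hcomm hJ1 hJ hk hkK) m
end

section
/- Let q ∈ ℂ with q ≠ 0 and qᵏ ≠ 1 for every integer k ≥ 1, let m ≥ 1, and let λ₁ ≥ λ₂ ≥ … ≥ λ_m ≥ 0 be integers. Set ℓ_i = λ_i − i and μ_i := q^{−2(λ_i − i + m)} for 1 ≤ i ≤ m (the μ_i are then pairwise distinct). Then for every n ≥ 1: Σ_{i=1}^{m} μ_iⁿ d_i(μ) = q^{−m(2n+1)} Σ_{i=1}^{m} q^{−2n ℓ_i} ∏_{j≠i} (ℓ_i − ℓ_j − 1)_q / (ℓ_i − ℓ_j)_q. -/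
open Finset

/-!
The identity holds term by term. Since `μᵢ / μⱼ = q^{-2(ℓᵢ - ℓⱼ)}`, each factor
`(μᵢ - q⁻² μⱼ) / (μᵢ - μⱼ)` of `dᵢ` equals `q⁻¹ (ℓᵢ - ℓⱼ - 1)_q / (ℓᵢ - ℓⱼ)_q`, and the remaining
powers `μᵢⁿ q⁻¹ q^{-(m-1)}` collect to `q^{-m(2n+1)} q^{-2nℓᵢ}`.
-/

def qNumber {K : Type*} [Field K] (q : K) (a : ℤ) : K := (q ^ a - q ^ (-a)) / (q - q⁻¹)

theorem zpow_neg_two_mul {K : Type*} [DivisionRing K] (q : K) (a : ℤ) :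
    q ^ (-2 * a) = ((q ^ a) ^ 2)⁻¹ := by
  rw [neg_mul, zpow_neg, mul_comm, zpow_mul]; norm_cast

/-- When `q^{2(a-b)} = 1` both denominators vanish and both sides are `0`. -/
theorem qNumber_sub_one_div_qNumber {K : Type*} [Field K] {q : K} (hq : q ≠ 0) (a b : ℤ) :
    (q ^ (-2 * a) - q⁻¹ ^ 2 * q ^ (-2 * b)) / (q ^ (-2 * a) - q ^ (-2 * b))
      = q⁻¹ * (qNumber q (a - b - 1) / qNumber q (a - b)) := by
  have hx : q ^ a ≠ 0 := zpow_ne_zero a hq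
  have hy : q ^ b ≠ 0 := zpow_ne_zero b hq
  have hsq : q ^ 2 = 1 → (q ^ a) ^ 2 = (q ^ b) ^ 2 := by
    intro h
    have (c : ℤ) : (q ^ c) ^ 2 = 1 := by
      rw [← zpow_natCast, ← zpow_mul, mul_comm, zpow_mul, zpow_natCast, h, one_zpow]
    rw [this, this]
  simp only [qNumber, zpow_neg_two_mul, zpow_neg, zpow_sub₀ hq, zpow_one]
  generalize q ^ a = x at *
  generalize q ^ b = y at *
  by_cases hxy : x ^ 2 = y ^ 2
  · have h1 : (x ^ 2)⁻¹ - (y ^ 2)⁻¹ = 0 := by rw [hxy, sub_self]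
    have h2 : x / y - (x / y)⁻¹ = 0 := by
      rw [sub_eq_zero]; field_simp; linear_combination hxy
    rw [h1, h2]; simp
  · have hq2 : q ^ 2 ≠ 1 := fun h => hxy (hsq h)
    have hqq : q - q⁻¹ ≠ 0 := by
      rw [sub_ne_zero]; intro h; apply hq2; field_simp at h; linear_combination h
    have h1 : (x ^ 2)⁻¹ - (y ^ 2)⁻¹ ≠ 0 := by
      rw [sub_ne_zero]; exact fun h => hxy (inv_injective h)
    have h2 : x / y - (x / y)⁻¹ ≠ 0 := by
      rw [sub_ne_zero]; intro h; apply hxy; field_simp at h; linear_combination h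
    field_simp
    ring

theorem stmt_17_general (q : ℂ) (hq : q ≠ 0)
    (m : ℕ) (lam : Fin m → ℕ)
    (ℓ : Fin m → ℤ) (hℓ : ∀ i : Fin m, ℓ i = (lam i : ℤ) - ((i : ℕ) + 1))
    (μ : Fin m → ℂ)
    (hμ : ∀ i : Fin m, μ i = q ^ (-2 * ((lam i : ℤ) - ((i : ℕ) + 1) + (m : ℤ))))
    (d : Fin m → ℂ)
    (hd : ∀ i : Fin m,
      d i = q⁻¹ * ∏ j ∈ univ.erase i, (μ i - q⁻¹ ^ 2 * μ j) / (μ i - μ j))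
    (qnum : ℤ → ℂ) (hqnum : ∀ a : ℤ, qnum a = (q ^ a - q ^ (-a)) / (q - q⁻¹)) :
    ∀ n : ℕ, 1 ≤ n →
      ∑ i, μ i ^ n * d i
        = q ^ (-(m : ℤ) * (2 * (n : ℤ) + 1)) *
            ∑ i, q ^ (-2 * (n : ℤ) * ℓ i) *
              ∏ j ∈ univ.erase i, qnum (ℓ i - ℓ j - 1) / qnum (ℓ i - ℓ j) := by
  intro n _
  have hμℓ (i : Fin m) : μ i = q ^ (-2 * (ℓ i + m)) := by rw [hμ, hℓ]
  have hfactor (i j : Fin m) :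
      (μ i - q⁻¹ ^ 2 * μ j) / (μ i - μ j) = q⁻¹ * (qnum (ℓ i - ℓ j - 1) / qnum (ℓ i - ℓ j)) := by
    rw [hμℓ, hμℓ, qNumber_sub_one_div_qNumber hq, add_sub_add_right_eq_sub, hqnum, hqnum]
    rfl
  rw [mul_sum]
  refine sum_congr rfl fun i _ => ?_
  have hpow : q⁻¹ * q⁻¹ ^ (m - 1) = q ^ (-(m : ℤ)) := by
    rw [← pow_succ', Nat.sub_add_cancel i.pos, inv_pow, zpow_neg, zpow_natCast]
  rw [hd, prod_congr rfl fun j _ => hfactor i j, prod_mul_distrib, prod_const,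
    card_erase_of_mem (mem_univ i), card_univ, Fintype.card_fin, ← mul_assoc q⁻¹, hpow, hμℓ,
    ← zpow_natCast, ← zpow_mul, ← mul_assoc, ← mul_assoc, ← zpow_add₀ hq, ← zpow_add₀ hq]
  congr 2
  ring

/-- character of the power sums in the module `V^λ`: for
`μᵢ = q^{−2(λᵢ−i+m)}` (1-based `i`; entry `i : Fin m` corresponds to `i+1`),
`Σᵢ μᵢⁿ dᵢ(μ) = q^{−m(2n+1)} Σᵢ q^{−2nℓᵢ} ∏_{j≠i} (ℓᵢ−ℓⱼ−1)_q/(ℓᵢ−ℓⱼ)_q`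
with `ℓᵢ = λᵢ − i`. -/
theorem stmt_17 (q : ℂ) (hq : q ≠ 0) (hqk : ∀ k : ℕ, 1 ≤ k → q ^ k ≠ 1)
    (m : ℕ) (hm : 1 ≤ m) (lam : Fin m → ℕ)
    (hlam : ∀ i j : Fin m, i ≤ j → lam j ≤ lam i)
    (ℓ : Fin m → ℤ) (hℓ : ∀ i : Fin m, ℓ i = (lam i : ℤ) - ((i : ℕ) + 1))
    (μ : Fin m → ℂ)
    (hμ : ∀ i : Fin m, μ i = q ^ (-2 * ((lam i : ℤ) - ((i : ℕ) + 1) + (m : ℤ))))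
    (d : Fin m → ℂ)
    (hd : ∀ i : Fin m,
      d i = q⁻¹ * ∏ j ∈ univ.erase i, (μ i - q⁻¹ ^ 2 * μ j) / (μ i - μ j))
    (qnum : ℤ → ℂ) (hqnum : ∀ a : ℤ, qnum a = (q ^ a - q ^ (-a)) / (q - q⁻¹)) :
    ∀ n : ℕ, 1 ≤ n →
      ∑ i, μ i ^ n * d i
        = q ^ (-(m : ℤ) * (2 * (n : ℤ) + 1)) *
            ∑ i, q ^ (-2 * (n : ℤ) * ℓ i) *
              ∏ j ∈ univ.erase i, qnum (ℓ i - ℓ j - 1) / qnum (ℓ i - ℓ j) :=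
  stmt_17_general q hq m lam ℓ hℓ μ hμ d hd qnum hqnum
end
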